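/- Let T be a game tree, A ⊆ [T], and B ⊆ A with B = ⋂_{n∈ℕ} Dₙ where each Dₙ ⊆ ℕ^ℕ is open. Suppose player I has no winning strategy in G(A; T), and let T' be II's non-losing quasi-strategy for G(A;T). For n ∈ ℕ set Eₙ = A ∪ {x ∈ [T'] : there is a finite initial segment p of x with [T'_p] ⊆ Dₙ and p not good}. If there exists n ∈ ℕ such that player I has no winning strategy in G(Eₙ ∩ [T']; T'), then the empty position ∅ is good. -/

import Mathlib

/-- `T ⊆ List ℕ` is a game tree: nonempty, closed under prefixes, and with no
terminal nodes. -/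
def IsGameTree (T : Set (List ℕ)) : Prop :=
  T.Nonempty ∧ (∀ p ∈ T, ∀ q : List ℕ, q <+: p → q ∈ T) ∧
    ∀ p ∈ T, ∃ n : ℕ, p ++ [n] ∈ T

/-- The finite initial segment of `x : ℕ → ℕ` of length `k`, as a list. -/
def seg (x : ℕ → ℕ) (k : ℕ) : List ℕ := (List.range k).map x

/-- The body `[T]` of a tree: all infinite plays whose finite initial segments
all lie in `T`. -/
def body (T : Set (List ℕ)) : Set (ℕ → ℕ) := {x | ∀ k, seg x k ∈ T}

/-- The localization `T_p` of `T` at a position `p`: all positions comparable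
with `p`. -/
def restrict (T : Set (List ℕ)) (p : List ℕ) : Set (List ℕ) :=
  {q ∈ T | q <+: p ∨ p <+: q}

/-- `x` is a play consistent with `σ` used as a strategy for player I, who
moves at even stages. -/
def ConsWithI (σ : List ℕ → ℕ) (x : ℕ → ℕ) : Prop :=
  ∀ k, Even k → x k = σ (seg x k)

/-- `x` is a play consistent with `σ` used as a strategy for player II, who
moves at odd stages. -/
def ConsWithII (σ : List ℕ → ℕ) (x : ℕ → ℕ) : Prop :=
  ∀ k, ¬ Even k → x k = σ (seg x k)

/-- `σ` is a winning strategy for player I in the game `G(A; T)`: it assigns a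
legal move at every position of `T` where it is I's turn, and every play in
`[T]` consistent with it lies in `A`. -/
def WinStratI (T : Set (List ℕ)) (A : Set (ℕ → ℕ)) (σ : List ℕ → ℕ) : Prop :=
  (∀ p ∈ T, Even p.length → p ++ [σ p] ∈ T) ∧
    ∀ x ∈ body T, ConsWithI σ x → x ∈ A

/-- `σ` is a winning strategy for player II in the game `G(A; T)`: it assigns a
legal move at every position of `T` where it is II's turn, and every play in
`[T]` consistent with it lies outside `A`. -/
def WinStratII (T : Set (List ℕ)) (A : Set (ℕ → ℕ)) (σ : List ℕ → ℕ) : Prop :=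
  (∀ p ∈ T, ¬ Even p.length → p ++ [σ p] ∈ T) ∧
    ∀ x ∈ body T, ConsWithII σ x → x ∉ A

/-- `S` is a quasi-strategy for player II in the game tree `T`: a game
subtree which does not restrict I's moves. -/
def QuasiII (T S : Set (List ℕ)) : Prop :=
  IsGameTree S ∧ S ⊆ T ∧
    ∀ p ∈ S, Even p.length → ∀ n : ℕ, p ++ [n] ∈ T → p ++ [n] ∈ S

/-- Player II's non-losing quasi-strategy `T'` for `G(A ∩ [T]; T)`. -/
def NonLosing (T : Set (List ℕ)) (A : Set (ℕ → ℕ)) : Set (List ℕ) :=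
  {p ∈ T | ∀ q : List ℕ, q <+: p → Even q.length →
    ¬ ∃ σ, WinStratI (restrict T q) (A ∩ body (restrict T q)) σ}

/-- A position `p` of `T'` is good (w.r.t. `A` and `B ⊆ A`) if there is a
quasi-strategy `S` for II in `T'_p` with `[S] ∩ B = ∅` such that I has no
winning strategy in `G(A ∩ [S]; S)`. -/
def Good (T' : Set (List ℕ)) (A B : Set (ℕ → ℕ)) (p : List ℕ) : Prop :=
  p ∈ T' ∧ ∃ S : Set (List ℕ), QuasiII (restrict T' p) S ∧ body S ∩ B = ∅ ∧
    ¬ ∃ σ, WinStratI S (A ∩ body S) σ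

/-!
Let `U` be II's non-losing quasi-strategy for `G(Eₙ ∩ [T']; T')` and call `q ∈ U` a switch
point if it is a prefix-minimal position of even length that is good and has `[T'_q] ⊆ Dₙ`.
II plays `U` until a switch point `q` is reached and then a witness `W q` of the goodness of `q`.
A play of this glued quasi-strategy `S` either ends in some `[W q]`, which misses `B`, or stays
in `U` without meeting a switch point; such a play leaves `Dₙ ⊇ B`, since otherwise it has an
even initial segment `p` with `[T'_p] ⊆ Dₙ`, which cannot be good (a prefix of it would be a
switch point), so `[T'_p] ⊆ Eₙ` and I would win from `p ∈ U`. A winning strategy for I in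
`G(A ∩ [S]; S)` either reaches a switch point `q`, and then wins `G(A ∩ [W q]; W q)`, or never
does, and then wins in `U` for `A ⊆ Eₙ`, hence in `T'`.
-/

section Positions

lemma seg_length (x : ℕ → ℕ) (k : ℕ) : (seg x k).length = k := by simp [seg]

lemma seg_succ (x : ℕ → ℕ) (k : ℕ) : seg x (k + 1) = seg x k ++ [x k] := by
  simp [seg, List.range_succ]

lemma take_seg (x : ℕ → ℕ) {j k : ℕ} (h : j ≤ k) : (seg x k).take j = seg x j := by
  simp [seg, ← List.map_take, List.take_range, Nat.min_eq_left h]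

lemma seg_prefix_seg (x : ℕ → ℕ) {j k : ℕ} (h : j ≤ k) : seg x j <+: seg x k := by
  rw [← take_seg x h]
  exact List.take_prefix _ _

lemma getD_seg (x : ℕ → ℕ) {j k : ℕ} (h : j < k) : (seg x k).getD j 0 = x j := by
  simp [seg, h]

lemma seg_length_eq_of_prefix {x : ℕ → ℕ} {p : List ℕ} {k : ℕ} (h : p <+: seg x k) :
    seg x p.length = p := by
  have hl : p.length ≤ k := seg_length x k ▸ h.length_le
  have hp := List.prefix_iff_eq_take.mp h
  rw [take_seg x hl] at hp
  exact hp.symm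

lemma getD_of_prefix {p q : List ℕ} (h : p <+: q) {j : ℕ} (hj : j < p.length) :
    q.getD j 0 = p.getD j 0 := by
  obtain ⟨t, rfl⟩ := h
  exact List.getD_append _ _ _ _ hj

lemma prefix_of_comparable {p q : List ℕ} (h : p <+: q ∨ q <+: p)
    (hl : p.length ≤ q.length) : p <+: q := by
  rcases h with h | h
  · exact h
  · rw [h.eq_of_length (le_antisymm h.length_le hl)]

lemma length_lt_of_prefix_of_ne {p q : List ℕ} (h : p <+: q) (hne : p ≠ q) :
    p.length < q.length :=
  lt_of_le_of_ne h.length_le fun hl => hne (h.eq_of_length hl)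

lemma append_getD_prefix {p q : List ℕ} (h : p <+: q) (hl : p.length < q.length) :
    p ++ [q.getD p.length 0] <+: q := by
  obtain ⟨t, rfl⟩ := h
  obtain ⟨a, t, rfl⟩ := List.exists_cons_of_length_pos (by simpa using hl)
  simp

lemma prefix_of_prefix_append_of_ne {p r : List ℕ} {m : ℕ} (h : r <+: p ++ [m])
    (hne : r ≠ p ++ [m]) : r <+: p :=
  (List.prefix_concat_iff.mp h).resolve_left hne

lemma exists_minimal_prefix {P : List ℕ → Prop} {t : List ℕ} (ht : P t) :
    ∃ r, r <+: t ∧ P r ∧ ∀ r', r' <+: r → P r' → r' = r := by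
  classical
  have hex : ∃ m, P (t.take m) := ⟨t.length, by rwa [List.take_length]⟩
  refine ⟨t.take (Nat.find hex), List.take_prefix _ _, Nat.find_spec hex, ?_⟩
  intro r' hr' hPr'
  have hr'eq : t.take r'.length = r' :=
    (List.prefix_iff_eq_take.mp (hr'.trans (List.take_prefix _ _))).symm
  have hle : Nat.find hex ≤ r'.length := Nat.find_min' hex (by rwa [hr'eq])
  refine hr'.eq_of_length (le_antisymm hr'.length_le ?_)
  rw [List.length_take]
  exact (min_le_left _ _).trans hle

end Positions

section Trees

variable {Y : Set (List ℕ)}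

lemma restrict_nil (Y : Set (List ℕ)) : restrict Y [] = Y := by
  ext q
  simp [restrict]

lemma mem_restrict_self {q : List ℕ} (h : q ∈ Y) : q ∈ restrict Y q :=
  ⟨h, Or.inl List.prefix_rfl⟩

lemma body_restrict_subset (q : List ℕ) : body (restrict Y q) ⊆ body Y :=
  fun _ hx k => (hx k).1

lemma seg_length_eq_of_mem_body_restrict {q : List ℕ} {x : ℕ → ℕ}
    (h : x ∈ body (restrict Y q)) : seg x q.length = q := by
  rcases (h q.length).2 with h' | h'
  · exact h'.eq_of_length (seg_length x _)
  · exact (h'.eq_of_length (seg_length x _).symm).symm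

lemma mem_body_restrict {q : List ℕ} {x : ℕ → ℕ} (hx : x ∈ body Y)
    (hq : seg x q.length = q) : x ∈ body (restrict Y q) := by
  intro k
  refine ⟨hx k, ?_⟩
  rw [← hq]
  rcases le_total k q.length with h | h
  · exact Or.inl (seg_prefix_seg x h)
  · exact Or.inr (seg_prefix_seg x h)

lemma IsGameTree.nil_mem (hY : IsGameTree Y) : [] ∈ Y := by
  obtain ⟨p, hp⟩ := hY.1
  exact hY.2.1 p hp [] List.nil_prefix

lemma isGameTree_restrict (hY : IsGameTree Y) {q : List ℕ} (hq : q ∈ Y) :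
    IsGameTree (restrict Y q) := by
  refine ⟨⟨q, mem_restrict_self hq⟩, ?_, ?_⟩
  · rintro t ⟨htY, htq⟩ r hr
    refine ⟨hY.2.1 t htY r hr, ?_⟩
    rcases htq with h | h
    · exact Or.inl (hr.trans h)
    · exact List.prefix_or_prefix_of_prefix hr h
  · rintro t ⟨htY, htq | hqt⟩
    · by_cases he : t = q
      · subst he
        obtain ⟨n, hn⟩ := hY.2.2 t htY
        exact ⟨n, hn, Or.inr (List.prefix_append _ _)⟩
      · have hnext := append_getD_prefix htq (length_lt_of_prefix_of_ne htq he)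
        exact ⟨_, hY.2.1 q hq _ hnext, Or.inl hnext⟩
    · obtain ⟨n, hn⟩ := hY.2.2 t htY
      exact ⟨n, hn, Or.inr (hqt.trans (List.prefix_append _ _))⟩

/-- `W` has arbitrarily long positions, all comparable with `q`. -/
lemma IsGameTree.mem_of_subset_restrict {W : Set (List ℕ)} (hW : IsGameTree W) {q : List ℕ}
    (hsub : W ⊆ restrict Y q) : q ∈ W := by
  have hlong : ∀ j, ∃ p ∈ W, j ≤ p.length := by
    intro j
    induction j with
    | zero => exact hW.1.imp fun p hp => ⟨hp, Nat.zero_le _⟩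
    | succ j ih =>
      obtain ⟨p, hp, hl⟩ := ih
      obtain ⟨m, hm⟩ := hW.2.2 p hp
      exact ⟨p ++ [m], hm, by simp; omega⟩
  obtain ⟨p, hp, hl⟩ := hlong q.length
  exact hW.2.1 p hp q (prefix_of_comparable (hsub hp).2.symm hl)

lemma exists_body_restrict_subset_of_isOpen {s : Set (ℕ → ℕ)} (hs : IsOpen s) {x : ℕ → ℕ}
    (hx : x ∈ s) : ∃ k, ∀ m, k ≤ m → body (restrict Y (seg x m)) ⊆ s := by
  obtain ⟨I, u, hu, hIu⟩ := isOpen_pi_iff.mp hs x hx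
  refine ⟨I.sup id + 1, fun m hm y hy => hIu fun i hi => ?_⟩
  have him : i < m := (Nat.lt_succ_of_le (Finset.le_sup (f := id) hi)).trans_le hm
  have hyx : seg y m = seg x m := by
    simpa [seg_length] using seg_length_eq_of_mem_body_restrict hy
  have hyi : y i = x i := by
    rw [← getD_seg y him, ← getD_seg x him, hyx]
  exact hyi ▸ (hu i hi).2

end Trees

section Strategies

variable {Y : Set (List ℕ)} {X X' : Set (ℕ → ℕ)} {σ : List ℕ → ℕ}

lemma winStratI_inter_body_iff : WinStratI Y (X ∩ body Y) σ ↔ WinStratI Y X σ :=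
  ⟨fun h => ⟨h.1, fun x hx hc => (h.2 x hx hc).1⟩,
    fun h => ⟨h.1, fun x hx hc => ⟨h.2 x hx hc, hx⟩⟩⟩

lemma WinStratI.mono (h : WinStratI Y X σ) (hXX' : X ⊆ X') : WinStratI Y X' σ :=
  ⟨h.1, fun x hx hc => hXX' (h.2 x hx hc)⟩

open Classical in
noncomputable def legalMove (Y : Set (List ℕ)) (p : List ℕ) : ℕ :=
  if h : ∃ n, p ++ [n] ∈ Y then h.choose else 0

lemma legalMove_mem (hY : IsGameTree Y) {p : List ℕ} (hp : p ∈ Y) :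
    p ++ [legalMove Y p] ∈ Y := by
  have h := hY.2.2 p hp
  rw [legalMove, dif_pos h]
  exact h.choose_spec

lemma winStratI_of_body_subset (hY : IsGameTree Y) (h : body Y ⊆ X) :
    ∃ σ, WinStratI Y X σ :=
  ⟨legalMove Y, fun _ hp _ => legalMove_mem hY hp, fun _ hx _ => h hx⟩

def followStem (q : List ℕ) (σ : List ℕ → ℕ) (t : List ℕ) : ℕ :=
  if t.length < q.length then q.getD t.length 0 else σ t

lemma append_followStem_prefix {q t : List ℕ} (htq : t <+: q) (hlt : t.length < q.length) :
    t ++ [followStem q σ t] <+: q := by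
  rw [followStem, if_pos hlt]
  exact append_getD_prefix htq hlt

lemma consWithI_followStem_iff {q : List ℕ} {x : ℕ → ℕ} (hx : seg x q.length = q) :
    ConsWithI (followStem q σ) x ↔ ∀ k, Even k → q.length ≤ k → x k = σ (seg x k) := by
  constructor
  · intro h k hk hqk
    have hxk := h k hk
    rwa [followStem, if_neg (by rw [seg_length]; omega)] at hxk
  · intro h k hk
    rw [followStem, seg_length]
    split_ifs with hkq
    · rw [← hx, getD_seg x hkq]
    · exact h k hk (not_lt.mp hkq)

lemma WinStratI.apply_eq_getD {q : List ℕ} (hσ : WinStratI (restrict Y q) X σ)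
    {t : List ℕ} (ht : t ∈ Y) (htq : t <+: q) (hlt : t.length < q.length)
    (hev : Even t.length) : σ t = q.getD t.length 0 := by
  have hnext : t ++ [σ t] <+: q :=
    prefix_of_comparable (hσ.1 t ⟨ht, Or.inl htq⟩ hev).2 (by simp; omega)
  rw [getD_of_prefix hnext (by simp)]
  simp

/-- Inside `Y_q` the moves of `σ` below `q` are forced, so only its moves beyond `q` matter. -/
lemma WinStratI.mem_of_consWithI_followStem {q : List ℕ} (hσ : WinStratI (restrict Y q) X σ)
    {x : ℕ → ℕ} (hx : x ∈ body (restrict Y q)) (hc : ConsWithI (followStem q σ) x) :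
    x ∈ X := by
  have hxq := seg_length_eq_of_mem_body_restrict hx
  refine hσ.2 x hx fun k hk => ?_
  rcases lt_or_ge k q.length with hkq | hkq
  · have hpre : seg x k <+: q := hxq ▸ seg_prefix_seg x hkq.le
    rw [WinStratI.apply_eq_getD hσ (hx k).1 hpre (by rwa [seg_length]) (by rwa [seg_length]),
      seg_length, ← hxq, getD_seg x hkq]
  · exact (consWithI_followStem_iff hxq).mp hc k hk hkq

def ConsPosI (σ : List ℕ → ℕ) (p : List ℕ) : Prop :=
  ∀ j, Even j → j < p.length → p.getD j 0 = σ (p.take j)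

lemma consPosI_seg_iff {x : ℕ → ℕ} {k : ℕ} :
    ConsPosI σ (seg x k) ↔ ∀ j, Even j → j < k → x j = σ (seg x j) := by
  rw [ConsPosI, seg_length]
  refine forall₃_congr fun j _ hjk => ?_
  rw [getD_seg x hjk, take_seg x hjk.le]

end Strategies

section NonLosing

variable {Y : Set (List ℕ)} {X : Set (ℕ → ℕ)}

lemma mem_nonLosing {p : List ℕ} : p ∈ NonLosing Y X ↔
    p ∈ Y ∧ ∀ q, q <+: p → Even q.length → ¬ ∃ σ, WinStratI (restrict Y q) X σ := by
  simp only [NonLosing, Set.mem_ofPred_eq, winStratI_inter_body_iff]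

lemma mem_nonLosing_of_prefix (hY : IsGameTree Y) {p r : List ℕ}
    (hp : p ∈ NonLosing Y X) (hr : r <+: p) : r ∈ NonLosing Y X :=
  ⟨hY.2.1 p hp.1 r hr, fun q hq => hp.2 q (hq.trans hr)⟩

lemma not_winStratI_restrict_of_mem_nonLosing {p : List ℕ} (hp : p ∈ NonLosing Y X)
    (he : Even p.length) : ¬ ∃ σ, WinStratI (restrict Y p) X σ :=
  (mem_nonLosing.mp hp).2 p List.prefix_rfl he

lemma nil_mem_nonLosing (hY : IsGameTree Y) (h : ¬ ∃ σ, WinStratI Y X σ) :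
    [] ∈ NonLosing Y X := by
  refine mem_nonLosing.mpr ⟨hY.nil_mem, fun q hq _ => ?_⟩
  rwa [List.prefix_nil.mp hq, restrict_nil]

lemma append_mem_nonLosing_of_even {p : List ℕ} {n : ℕ} (hp : p ∈ NonLosing Y X)
    (he : Even p.length) (hn : p ++ [n] ∈ Y) : p ++ [n] ∈ NonLosing Y X := by
  refine mem_nonLosing.mpr ⟨hn, fun q hq hqe => ?_⟩
  have hne : q ≠ p ++ [n] := by
    rintro rfl
    simp [Nat.even_add_one, he] at hqe
  exact (mem_nonLosing.mp hp).2 q (prefix_of_prefix_append_of_ne hq hne) hqe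

lemma winStratI_restrict_of_minimal_not_mem {p : List ℕ} (hp : p ∈ Y)
    (hpN : p ∉ NonLosing Y X) (hmin : ∀ r, r <+: p → r ∉ NonLosing Y X → r = p) :
    ∃ σ, WinStratI (restrict Y p) X σ := by
  simp only [mem_nonLosing, hp, true_and, not_forall, not_not] at hpN
  obtain ⟨q, hqp, hqe, hwin⟩ := hpN
  obtain rfl : q = p :=
    hmin q hqp fun hqN => not_winStratI_restrict_of_mem_nonLosing hqN hqe hwin
  exact hwin

lemma winStratI_restrict_of_forall_append (hY : IsGameTree Y) {p : List ℕ} (hp : p ∈ Y)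
    (hodd : ¬ Even p.length)
    (h : ∀ n, p ++ [n] ∈ Y → ∃ σ, WinStratI (restrict Y (p ++ [n])) X σ) :
    ∃ σ, WinStratI (restrict Y p) X σ := by
  choose! F hF using h
  refine ⟨followStem p fun t => F (t.getD p.length 0) t, ?_, ?_⟩
  · rintro t ⟨htY, htp | hpt⟩ hev
    · have hlt := length_lt_of_prefix_of_ne htp (by rintro rfl; exact hodd hev)
      have hnext := append_followStem_prefix (σ := fun t => F (t.getD p.length 0) t) htp hlt
      exact ⟨hY.2.1 p hp _ hnext, Or.inl hnext⟩
    · have hlt := length_lt_of_prefix_of_ne hpt (by rintro rfl; exact hodd hev)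
      have hchild := append_getD_prefix hpt hlt
      have hmove := (hF _ (hY.2.1 t htY _ hchild)).1 t ⟨htY, Or.inr hchild⟩ hev
      rw [followStem, if_neg (by omega)]
      exact ⟨hmove.1, Or.inr (hpt.trans (List.prefix_append _ _))⟩
  · intro x hx hc
    have hxp := seg_length_eq_of_mem_body_restrict hx
    have hxc : seg x (p ++ [x p.length]).length = p ++ [x p.length] := by
      rw [List.length_append, List.length_singleton, seg_succ, hxp]
    refine WinStratI.mem_of_consWithI_followStem (hF _ (hxc ▸ (hx _).1))
      (mem_body_restrict (body_restrict_subset p hx) hxc)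
      ((consWithI_followStem_iff hxc).mpr fun k hk hck => ?_)
    simp only [List.length_append, List.length_singleton] at hck
    have hxk := (consWithI_followStem_iff hxp).mp hc k hk (by omega)
    rwa [getD_seg x (by omega)] at hxk

lemma winStratI_restrict_of_append (hY : IsGameTree Y) {p : List ℕ} {n : ℕ}
    (hev : Even p.length) (hc : p ++ [n] ∈ Y)
    (h : ∃ σ, WinStratI (restrict Y (p ++ [n])) X σ) :
    ∃ σ, WinStratI (restrict Y p) X σ := by
  obtain ⟨σ, hσ⟩ := h
  refine ⟨followStem (p ++ [n]) fun t => if p ++ [n] <+: t then σ t else legalMove Y t,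
    ?_, ?_⟩
  · rintro t ⟨htY, htp⟩ hev'
    by_cases hlt : t.length < (p ++ [n]).length
    · have htc : t <+: p ++ [n] :=
        (prefix_of_comparable htp (by simp at hlt; omega)).trans (List.prefix_append _ _)
      have hnext := append_followStem_prefix
        (σ := fun t => if p ++ [n] <+: t then σ t else legalMove Y t) htc hlt
      exact ⟨hY.2.1 _ hc _ hnext,
        List.prefix_or_prefix_of_prefix hnext (List.prefix_append p [n])⟩
    · have hpt : p <+: t := prefix_of_comparable htp.symm (by simp at hlt; omega)
      have hpt' : ∀ m, p <+: t ++ [m] := fun m => hpt.trans (List.prefix_append t [m])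
      rw [followStem, if_neg hlt]
      split_ifs with hct
      · exact ⟨(hσ.1 t ⟨htY, Or.inr hct⟩ hev').1, Or.inr (hpt' _)⟩
      · exact ⟨legalMove_mem hY htY, Or.inr (hpt' _)⟩
  · intro x hx hcons
    have hxp := seg_length_eq_of_mem_body_restrict hx
    have hxc : seg x (p ++ [n]).length = p ++ [n] := by
      rw [List.length_append, List.length_singleton, seg_succ, hxp, hcons _ hev, hxp,
        followStem, if_pos (by simp)]
      simp
    refine WinStratI.mem_of_consWithI_followStem hσ
      (mem_body_restrict (body_restrict_subset p hx) hxc)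
      ((consWithI_followStem_iff hxc).mpr fun k hk hck => ?_)
    have hxk := (consWithI_followStem_iff hxc).mp hcons k hk hck
    rwa [if_pos (hxc ▸ seg_prefix_seg x hck)] at hxk

/-- If II had no move at an odd position of `NonLosing Y X`, I would win from each child and
hence already from the preceding even position. -/
lemma exists_append_mem_nonLosing_of_odd (hY : IsGameTree Y) {p : List ℕ}
    (hp : p ∈ NonLosing Y X) (hodd : ¬ Even p.length) :
    ∃ n, p ++ [n] ∈ NonLosing Y X := by
  by_contra hnone
  rw [not_exists] at hnone
  have hchild : ∀ n, p ++ [n] ∈ Y → ∃ σ, WinStratI (restrict Y (p ++ [n])) X σ :=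
    fun n hn => winStratI_restrict_of_minimal_not_mem hn (hnone n) fun r hr hrN =>
      by_contra fun hne =>
        hrN (mem_nonLosing_of_prefix hY hp (prefix_of_prefix_append_of_ne hr hne))
  obtain ⟨q, m, rfl⟩ :=
    (List.eq_nil_or_concat' p).resolve_left (by rintro rfl; exact hodd (by simp))
  have hqe : Even q.length := by simpa [Nat.even_add_one] using hodd
  exact not_winStratI_restrict_of_mem_nonLosing
    (mem_nonLosing_of_prefix hY hp (List.prefix_append q [m])) hqe
    (winStratI_restrict_of_append hY hqe hp.1
      (winStratI_restrict_of_forall_append hY hp.1 hodd hchild))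

lemma quasiII_nonLosing (hY : IsGameTree Y) (h : ¬ ∃ σ, WinStratI Y X σ) :
    QuasiII Y (NonLosing Y X) := by
  refine ⟨⟨⟨[], nil_mem_nonLosing hY h⟩, fun p hp r hr => mem_nonLosing_of_prefix hY hp hr,
    fun p hp => ?_⟩, fun _ hp => hp.1, fun p hp he n hn => append_mem_nonLosing_of_even hp he hn⟩
  by_cases he : Even p.length
  · obtain ⟨n, hn⟩ := hY.2.2 p hp.1
    exact ⟨n, append_mem_nonLosing_of_even hp he hn⟩
  · exact exists_append_mem_nonLosing_of_odd hY hp he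

open Classical in
noncomputable def firstExit (N : Set (List ℕ)) (t : List ℕ) : List ℕ :=
  if h : ∃ m, t.take m ∉ N then t.take (Nat.find h) else t

lemma firstExit_eq {N : Set (List ℕ)} {t r : List ℕ} (hrt : r <+: t) (hr : r ∉ N)
    (hmin : ∀ r', r' <+: r → r' ∉ N → r' = r) : firstExit N t = r := by
  classical
  have hrt' : t.take r.length = r := (List.prefix_iff_eq_take.mp hrt).symm
  have hex : ∃ m, t.take m ∉ N := ⟨r.length, by rwa [hrt']⟩
  rw [firstExit, dif_pos hex]
  refine hmin _ (List.prefix_of_prefix_length_le (List.take_prefix _ _) hrt ?_)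
    (Nat.find_spec hex)
  exact (List.length_take_le _ _).trans (Nat.find_min' hex (by rwa [hrt']))

/-- Against a strategy for I that wins on II's non-losing quasi-strategy, II's only other
option is to leave it; from the first exit on, I switches to a local winning strategy. -/
lemma winStratI_of_winStratI_nonLosing (hY : IsGameTree Y)
    (h : ∃ σ, WinStratI (NonLosing Y X) X σ) : ∃ σ, WinStratI Y X σ := by
  classical
  obtain ⟨σ, hσ⟩ := h
  choose! ρ hρ using fun r (h : ∃ ρ, WinStratI (restrict Y r) X ρ) => h
  have hexit : ∀ t ∈ Y, t ∉ NonLosing Y X → ∃ r, r <+: t ∧ r ∉ NonLosing Y X ∧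
      (∀ r', r' <+: r → r' ∉ NonLosing Y X → r' = r) ∧
      WinStratI (restrict Y r) X (ρ r) := by
    intro t ht htN
    obtain ⟨r, hrt, hrN, hmin⟩ := exists_minimal_prefix (P := (· ∉ NonLosing Y X)) htN
    exact ⟨r, hrt, hrN, hmin,
      hρ r (winStratI_restrict_of_minimal_not_mem (hY.2.1 t ht r hrt) hrN hmin)⟩
  refine ⟨fun t => if t ∈ NonLosing Y X then σ t else ρ (firstExit (NonLosing Y X) t) t,
    fun t ht hev => ?_, fun x hx hc => ?_⟩
  · dsimp only
    split_ifs with htN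
    · exact (hσ.1 t htN hev).1
    · obtain ⟨r, hrt, hrN, hmin, hwin⟩ := hexit t ht htN
      rw [firstExit_eq hrt hrN hmin]
      exact (hwin.1 t ⟨ht, Or.inr hrt⟩ hev).1
  by_cases hall : ∀ k, seg x k ∈ NonLosing Y X
  · refine hσ.2 x hall fun k hk => ?_
    simpa [hall k] using hc k hk
  simp only [not_forall] at hall
  obtain ⟨k, hk⟩ := hall
  obtain ⟨r, hrx, hrN, hmin, hwin⟩ := hexit _ (hx k) hk
  have hxr := seg_length_eq_of_prefix hrx
  refine WinStratI.mem_of_consWithI_followStem hwin (mem_body_restrict hx hxr)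
    ((consWithI_followStem_iff hxr).mpr fun j hj hrj => ?_)
  have hrj' : r <+: seg x j := hxr ▸ seg_prefix_seg x hrj
  have hjN : seg x j ∉ NonLosing Y X := fun hjN => hrN (mem_nonLosing_of_prefix hY hjN hrj')
  simpa [hjN, firstExit_eq hrj' hrN hmin] using hc j hj

end NonLosing

section Glue

variable {Y U Q : Set (List ℕ)} {W : List ℕ → Set (List ℕ)}

/-- II follows `U` until a position `q ∈ Q` is reached, and `W q` from then on. -/
def glue (U Q : Set (List ℕ)) (W : List ℕ → Set (List ℕ)) : Set (List ℕ) :=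
  {p | (p ∈ U ∧ ∀ r, r <+: p → r ∉ Q) ∨ ∃ q ∈ Q, p ∈ W q}

structure IsGluing (Y U Q : Set (List ℕ)) (W : List ℕ → Set (List ℕ)) : Prop where
  quasiII : QuasiII Y U
  subset : Q ⊆ U
  antichain : IsAntichain (· <+: ·) Q
  quasiII_restrict : ∀ q ∈ Q, QuasiII (restrict Y q) (W q)

namespace IsGluing

variable (h : IsGluing Y U Q W)
include h

lemma mem_self {q : List ℕ} (hq : q ∈ Q) : q ∈ W q :=
  (h.quasiII_restrict q hq).1.mem_of_subset_restrict (h.quasiII_restrict q hq).2.1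

lemma mem_glue {p : List ℕ} (hp : p ∈ U) (hpQ : ∀ r, r <+: p → r ≠ p → r ∉ Q) :
    p ∈ glue U Q W := by
  by_cases hp' : p ∈ Q
  · exact Or.inr ⟨p, hp', h.mem_self hp'⟩
  · exact Or.inl ⟨hp, fun r hr => if hrp : r = p then hrp ▸ hp' else hpQ r hr hrp⟩

lemma mem_glue_cases {p : List ℕ} (hp : p ∈ glue U Q W) :
    (∃ q ∈ Q, q <+: p ∧ p ∈ W q) ∨ (p ∈ U ∧ ∀ r, r <+: p → r ∉ Q) := by
  rcases hp with hp | ⟨q, hq, hpq⟩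
  · exact Or.inr hp
  by_cases hqp : q <+: p
  · exact Or.inl ⟨q, hq, hqp, hpq⟩
  have hpq' : p <+: q := ((h.quasiII_restrict q hq).2.1 hpq).2.resolve_right hqp
  refine Or.inr ⟨h.quasiII.1.2.1 q (h.subset hq) p hpq', fun r hrp hr => hqp ?_⟩
  exact h.antichain.eq hr hq (hrp.trans hpq') ▸ hrp

lemma mem_of_mem_glue_of_prefix {p q : List ℕ} (hp : p ∈ glue U Q W) (hq : q ∈ Q)
    (hqp : q <+: p) : p ∈ W q := by
  rcases h.mem_glue_cases hp with ⟨q', hq', hq'p, hpq'⟩ | ⟨-, hpQ⟩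
  · rcases List.prefix_or_prefix_of_prefix hqp hq'p with h' | h'
    · exact h.antichain.eq hq hq' h' ▸ hpq'
    · exact (h.antichain.eq hq' hq h').symm ▸ hpq'
  · exact absurd hq (hpQ q hqp)

lemma mem_glue_append {p : List ℕ} {m : ℕ} (hp : p ∈ U ∧ ∀ r, r <+: p → r ∉ Q)
    (hm : p ++ [m] ∈ U) : p ++ [m] ∈ glue U Q W :=
  h.mem_glue hm fun r hr hne => hp.2 r (prefix_of_prefix_append_of_ne hr hne)

lemma quasiII_glue : QuasiII Y (glue U Q W) := by
  have hUtree := h.quasiII.1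
  refine ⟨⟨⟨[], h.mem_glue hUtree.nil_mem fun r hr hne => absurd (List.prefix_nil.mp hr) hne⟩,
    ?_, fun p hp => ?_⟩, ?_, fun p hp he m hm => ?_⟩
  · rintro p (⟨hpU, hpQ⟩ | ⟨q, hq, hpq⟩) r hr
    · exact Or.inl ⟨hUtree.2.1 p hpU r hr, fun r' hr' => hpQ r' (hr'.trans hr)⟩
    · exact Or.inr ⟨q, hq, (h.quasiII_restrict q hq).1.2.1 p hpq r hr⟩
  · rcases h.mem_glue_cases hp with ⟨q, hq, -, hpq⟩ | hpU
    · obtain ⟨m, hm⟩ := (h.quasiII_restrict q hq).1.2.2 p hpq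
      exact ⟨m, Or.inr ⟨q, hq, hm⟩⟩
    · obtain ⟨m, hm⟩ := hUtree.2.2 p hpU.1
      exact ⟨m, h.mem_glue_append hpU hm⟩
  · rintro p (⟨hpU, -⟩ | ⟨q, hq, hpq⟩)
    · exact h.quasiII.2.1 hpU
    · exact ((h.quasiII_restrict q hq).2.1 hpq).1
  · rcases h.mem_glue_cases hp with ⟨q, hq, hqp, hpq⟩ | hpU
    · exact Or.inr ⟨q, hq, (h.quasiII_restrict q hq).2.2 p hpq he m
        ⟨hm, Or.inr (hqp.trans (List.prefix_append _ _))⟩⟩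
    · exact h.mem_glue_append hpU (h.quasiII.2.2 p hpU.1 he m hm)

lemma mem_body_glue {x : ℕ → ℕ} (hx : x ∈ body (glue U Q W)) :
    (∃ q ∈ Q, x ∈ body (W q)) ∨ (x ∈ body U ∧ ∀ k, seg x k ∉ Q) := by
  by_cases hxQ : ∃ k, seg x k ∈ Q
  · obtain ⟨k, hk⟩ := hxQ
    refine Or.inl ⟨seg x k, hk, fun j => ?_⟩
    rcases le_total k j with hkj | hjk
    · exact h.mem_of_mem_glue_of_prefix (hx j) hk (seg_prefix_seg x hkj)
    · exact (h.quasiII_restrict _ hk).1.2.1 _ (h.mem_self hk) _ (seg_prefix_seg x hjk)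
  simp only [not_exists] at hxQ
  refine Or.inr ⟨fun k => ?_, hxQ⟩
  rcases h.mem_glue_cases (hx k) with ⟨q, hq, hqx, -⟩ | hU
  · exact absurd hq (seg_length_eq_of_prefix hqx ▸ hxQ q.length)
  · exact hU.1

variable {X : Set (ℕ → ℕ)} {σ : List ℕ → ℕ}

lemma winStratI_followStem (hσ : WinStratI (glue U Q W) X σ) {q : List ℕ} (hq : q ∈ Q)
    (hqσ : ConsPosI σ q) : WinStratI (W q) X (followStem q σ) := by
  have hWq := h.quasiII_restrict q hq
  constructor
  · intro t ht hev
    have hcmp := (hWq.2.1 ht).2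
    by_cases hlt : t.length < q.length
    · exact hWq.1.2.1 q (h.mem_self hq) _
        (append_followStem_prefix (prefix_of_comparable hcmp hlt.le) hlt)
    · rw [followStem, if_neg hlt]
      exact h.mem_of_mem_glue_of_prefix (hσ.1 t (Or.inr ⟨q, hq, ht⟩) hev) hq
        ((prefix_of_comparable hcmp.symm (not_lt.mp hlt)).trans (List.prefix_append _ _))
  · intro y hy hc
    have hyq := seg_length_eq_of_mem_body_restrict fun k => hWq.2.1 (hy k)
    refine hσ.2 y (fun k => Or.inr ⟨q, hq, hy k⟩) fun k hk => ?_
    rcases lt_or_ge k q.length with hkq | hkq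
    · rw [← hyq] at hqσ
      exact consPosI_seg_iff.mp hqσ k hk hkq
    · exact (consWithI_followStem_iff hyq).mp hc k hk hkq

lemma exists_winStratI_of_forall_not_consPosI (hσ : WinStratI (glue U Q W) X σ)
    (hQσ : ∀ q ∈ Q, ¬ ConsPosI σ q) : ∃ τ, WinStratI U X τ := by
  classical
  refine ⟨fun p => if p ∈ U ∧ ∀ r, r <+: p → r ∉ Q then σ p else legalMove U p, ?_, ?_⟩
  · intro p hp hev
    dsimp only
    split_ifs with hfree
    · rcases h.mem_glue_cases (hσ.1 p (Or.inl hfree) hev) with ⟨q, hq, hqp, -⟩ | hnext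
      · by_cases hqp' : q = p ++ [σ p]
        · exact hqp' ▸ h.subset hq
        · exact absurd hq (hfree.2 q (prefix_of_prefix_append_of_ne hqp hqp'))
      · exact hnext.1
    · exact legalMove_mem h.quasiII.1 hp
  · intro x hx hc
    have hfree : ∀ k, ∀ r, r <+: seg x k → r ∉ Q := by
      intro k r hr hrQ
      have hxr := seg_length_eq_of_prefix hr
      have hcons : ConsPosI σ (seg x r.length) := consPosI_seg_iff.mpr fun j hj hjr => by
        have hjfree : ∀ r', r' <+: seg x j → r' ∉ Q := fun r' hr' hr'Q => by
          obtain rfl := h.antichain.eq hr'Q hrQ (hr'.trans (hxr ▸ seg_prefix_seg x hjr.le))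
          have := hr'.length_le
          rw [seg_length] at this
          omega
        exact (hc j hj).trans (if_pos ⟨hx j, hjfree⟩)
      exact hQσ r hrQ (hxr ▸ hcons)
    refine hσ.2 x (fun k => Or.inl ⟨hx k, hfree k⟩) fun k hk => ?_
    exact (hc k hk).trans (if_pos ⟨hx k, hfree k⟩)

lemma not_winStratI_glue (hWX : ∀ q ∈ Q, ¬ ∃ σ, WinStratI (W q) X σ)
    (hUX : ¬ ∃ σ, WinStratI U X σ) : ¬ ∃ σ, WinStratI (glue U Q W) X σ := by
  rintro ⟨σ, hσ⟩
  by_cases hreach : ∃ q ∈ Q, ConsPosI σ q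
  · obtain ⟨q, hq, hqσ⟩ := hreach
    exact hWX q hq ⟨_, h.winStratI_followStem hσ hq hqσ⟩
  · simp only [not_exists, not_and] at hreach
    exact hUX (h.exists_winStratI_of_forall_not_consPosI hσ hreach)

end IsGluing

end Glue

def minimalPrefixes (U : Set (List ℕ)) (P : List ℕ → Prop) : Set (List ℕ) :=
  {q | q ∈ U ∧ P q ∧ ∀ r, r <+: q → P r → r = q}

lemma isAntichain_minimalPrefixes {U : Set (List ℕ)} {P : List ℕ → Prop} :
    IsAntichain (· <+: ·) (minimalPrefixes U P) :=
  fun _ hq _ hr hne hqr => hne (hr.2.2 _ hqr hq.2.1)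

lemma exists_seg_mem_minimalPrefixes {U : Set (List ℕ)} {P : List ℕ → Prop} {x : ℕ → ℕ}
    (hx : x ∈ body U) {k : ℕ} (hk : P (seg x k)) : ∃ j, seg x j ∈ minimalPrefixes U P := by
  obtain ⟨r, hr, hPr, hmin⟩ := exists_minimal_prefix hk
  have hxr := seg_length_eq_of_prefix hr
  refine ⟨r.length, ?_⟩
  rw [hxr]
  exact ⟨hxr ▸ hx r.length, hPr, hmin⟩

def GoodCone (T' : Set (List ℕ)) (A B Dn : Set (ℕ → ℕ)) (q : List ℕ) : Prop :=
  Even q.length ∧ body (restrict T' q) ⊆ Dn ∧ Good T' A B q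

lemma not_mem_of_forall_seg_not_mem_minimalPrefixes {T' : Set (List ℕ)} (hT' : IsGameTree T')
    {A B Dn En : Set (ℕ → ℕ)} (hDn : IsOpen Dn)
    (hEn : {x ∈ body T' | ∃ k : ℕ,
        body (restrict T' (seg x k)) ⊆ Dn ∧ ¬ Good T' A B (seg x k)} ⊆ En)
    {x : ℕ → ℕ} (hx : x ∈ body (NonLosing T' En))
    (hxQ : ∀ k, seg x k ∉ minimalPrefixes (NonLosing T' En) (GoodCone T' A B Dn)) :
    x ∉ Dn := by
  intro hxD
  obtain ⟨k, hk⟩ := exists_body_restrict_subset_of_isOpen (Y := T') hDn hxD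
  have hcone := hk (2 * k) (by omega)
  have hev : Even (seg x (2 * k)).length := by
    rw [seg_length]
    exact even_two_mul k
  by_cases hgood : Good T' A B (seg x (2 * k))
  · obtain ⟨j, hj⟩ := exists_seg_mem_minimalPrefixes (P := GoodCone T' A B Dn) hx
      ⟨hev, hcone, hgood⟩
    exact hxQ j hj
  · have hp : seg x (2 * k) ∈ NonLosing T' En := hx _
    refine not_winStratI_restrict_of_mem_nonLosing hp hev
      (winStratI_of_body_subset (isGameTree_restrict hT' hp.1) fun y hy =>
        hEn ⟨body_restrict_subset _ hy, (seg x (2 * k)).length, ?_⟩)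
    rw [seg_length_eq_of_mem_body_restrict hy]
    exact ⟨hcone, hgood⟩

theorem empty_is_good_general (T : Set (List ℕ)) (hT : IsGameTree T)
    (A B : Set (ℕ → ℕ))
    (D : ℕ → Set (ℕ → ℕ)) (hD : ∀ n, IsOpen (D n)) (hB : B = ⋂ n, D n)
    (hI : ¬ ∃ σ, WinStratI T A σ)
    (T' : Set (List ℕ)) (hT' : T' = NonLosing T A)
    (E : ℕ → Set (ℕ → ℕ))
    (hE : ∀ n, E n = A ∪ {x ∈ body T' | ∃ k : ℕ,
        body (restrict T' (seg x k)) ⊆ D n ∧ ¬ Good T' A B (seg x k)})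
    (hn : ∃ n, ¬ ∃ σ, WinStratI T' (E n ∩ body T') σ) :
    Good T' A B [] := by
  obtain ⟨n, hn⟩ := hn
  simp only [winStratI_inter_body_iff] at hn
  have hT'tree : IsGameTree T' := hT' ▸ (quasiII_nonLosing hT hI).1
  set U := NonLosing T' (E n)
  set Q := minimalPrefixes U (GoodCone T' A B (D n))
  choose! W hW using fun q (hq : q ∈ Q) => (hq.2.1.2.2 : Good T' A B q).2
  have hglue : IsGluing T' U Q W :=
    ⟨quasiII_nonLosing hT'tree hn, fun q hq => hq.1, isAntichain_minimalPrefixes,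
      fun q hq => (hW q hq).1⟩
  refine ⟨hT'tree.nil_mem, glue U Q W, (restrict_nil T').symm ▸ hglue.quasiII_glue,
    Set.eq_empty_iff_forall_notMem.mpr fun x hx => ?_, ?_⟩
  · obtain ⟨hxS, hxB⟩ := hx
    rcases hglue.mem_body_glue hxS with ⟨q, hq, hxW⟩ | ⟨hxU, hxQ⟩
    · exact Set.eq_empty_iff_forall_notMem.mp (hW q hq).2.1 x ⟨hxW, hxB⟩
    · exact not_mem_of_forall_seg_not_mem_minimalPrefixes hT'tree (hD n)
        (fun y hy => hE n ▸ Or.inr hy) hxU hxQ (Set.mem_iInter.mp (hB ▸ hxB) n)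
  · simp only [winStratI_inter_body_iff]
    refine hglue.not_winStratI_glue (fun q hq => ?_) fun ⟨σ, hσ⟩ => hn ?_
    · simpa only [winStratI_inter_body_iff] using (hW q hq).2.2
    · exact winStratI_of_winStratI_nonLosing hT'tree
        ⟨σ, WinStratI.mono hσ (hE n ▸ Set.subset_union_left)⟩

/-- The implication `(+) ⇒ "∅ is good"` from the proof of the paper's
Lemma 31: if for some `n` player I has no winning strategy in
`G(Eₙ ∩ [T']; T')`, then the empty position is good. -/
theorem empty_is_good (T : Set (List ℕ)) (hT : IsGameTree T)
    (A B : Set (ℕ → ℕ)) (hA : A ⊆ body T) (hBA : B ⊆ A)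
    (D : ℕ → Set (ℕ → ℕ)) (hD : ∀ n, IsOpen (D n)) (hB : B = ⋂ n, D n)
    (hI : ¬ ∃ σ, WinStratI T A σ)
    (T' : Set (List ℕ)) (hT' : T' = NonLosing T A)
    (E : ℕ → Set (ℕ → ℕ))
    (hE : ∀ n, E n = A ∪ {x ∈ body T' | ∃ k : ℕ,
        body (restrict T' (seg x k)) ⊆ D n ∧ ¬ Good T' A B (seg x k)})
    (hn : ∃ n, ¬ ∃ σ, WinStratI T' (E n ∩ body T') σ) :
    Good T' A B [] :=
  empty_is_good_general T hT A B D hD hB hI T' hT' E hE hn
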